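/- If C is a closed convex subset of hyperbolic n-space H^n and x is a point at distance d from C, then the nearest-point projection onto C contracts the local metric at x by at least a factor cosh(d) (in particular at least e^d/2). -/

import Mathlib

open Set

/-! The upper half-space model of hyperbolic `(m+1)`-space: points are pairs
`(p, t)` with `p ∈ ℝ^m` and `t > 0`, with hyperbolic distance
`d(x, y) = arcosh (1 + (|Δp|² + (Δt)²) / (2 t t'))`. -/

/-- Inverse hyperbolic cosine. -/
noncomputable def arcosh (x : ℝ) : ℝ := Real.log (x + Real.sqrt (x ^ 2 - 1))

/-- The upper half-space model of hyperbolic space. -/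
def UHS (m : ℕ) : Type := {x : EuclideanSpace ℝ (Fin m) × ℝ // 0 < x.2}

noncomputable instance (m : ℕ) : TopologicalSpace (UHS m) :=
  instTopologicalSpaceSubtype

/-- Hyperbolic distance in the upper half-space model. -/
noncomputable def hdist {m : ℕ} (x y : UHS m) : ℝ :=
  arcosh (1 + (dist x.1.1 y.1.1 ^ 2 + (x.1.2 - y.1.2) ^ 2) / (2 * x.1.2 * y.1.2))

/-- `γ` is a unit-speed hyperbolic geodesic segment on `[a, b]`. -/
def IsGeodesicSeg {m : ℕ} (γ : ℝ → UHS m) (a b : ℝ) : Prop :=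
  ∀ s ∈ Icc a b, ∀ t ∈ Icc a b, hdist (γ s) (γ t) = |s - t|

/-- A subset of hyperbolic space is convex if it contains every geodesic segment
between any two of its points. -/
def HConvex {m : ℕ} (C : Set (UHS m)) : Prop :=
  ∀ x ∈ C, ∀ y ∈ C, ∀ (γ : ℝ → UHS m) (a b : ℝ), a ≤ b → IsGeodesicSeg γ a b →
    γ a = x → γ b = y → ∀ t ∈ Icc a b, γ t ∈ C

/-- The hyperbolic length of a path, as the supremum of sums of hyperbolic
distances over partitions. -/
noncomputable def pathLen {m : ℕ} (γ : ℝ → UHS m) (a b : ℝ) : ℝ :=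
  sSup {r | ∃ l : List ℝ, l.Pairwise (· ≤ ·) ∧ (∀ t ∈ l, t ∈ Icc a b) ∧
    ((l.zip l.tail).map fun p => hdist (γ p.1) (γ p.2)).sum = r}

/-- The intrinsic (induced path) metric of a subset `S`: the infimum of lengths
of continuous paths in `S` joining the two points. -/
noncomputable def intrinsicDist {m : ℕ} (S : Set (UHS m)) (x y : UHS m) : ℝ :=
  sInf {r | ∃ γ : ℝ → UHS m, Continuous γ ∧ (∀ t ∈ Icc (0 : ℝ) 1, γ t ∈ S) ∧
    γ 0 = x ∧ γ 1 = y ∧ pathLen γ 0 1 = r}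

/-- Horospheres in the upper half-space model: horizontal hyperplanes (centered
at ∞) or Euclidean spheres tangent to the boundary. -/
def IsHorosphere {m : ℕ} (S : Set (UHS m)) : Prop :=
  (∃ c : ℝ, 0 < c ∧ S = {z : UHS m | z.1.2 = c}) ∨
  (∃ (q : EuclideanSpace ℝ (Fin m)) (r : ℝ), 0 < r ∧
    S = {z : UHS m | dist z.1.1 q ^ 2 + (z.1.2 - r) ^ 2 = r ^ 2})

/-- A (closed) horoball together with its bounding horosphere. -/
def IsHoroballPair {m : ℕ} (B S : Set (UHS m)) : Prop :=
  (∃ c : ℝ, 0 < c ∧ B = {z : UHS m | c ≤ z.1.2} ∧ S = {z : UHS m | z.1.2 = c}) ∨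
  (∃ (q : EuclideanSpace ℝ (Fin m)) (r : ℝ), 0 < r ∧
    B = {z : UHS m | dist z.1.1 q ^ 2 + (z.1.2 - r) ^ 2 ≤ r ^ 2} ∧
    S = {z : UHS m | dist z.1.1 q ^ 2 + (z.1.2 - r) ^ 2 = r ^ 2})

/-- A (closed) horoball together with its interior, the open horoball. -/
def IsHoroballOpenPair {m : ℕ} (B Bo : Set (UHS m)) : Prop :=
  (∃ c : ℝ, 0 < c ∧ B = {z : UHS m | c ≤ z.1.2} ∧ Bo = {z : UHS m | c < z.1.2}) ∨
  (∃ (q : EuclideanSpace ℝ (Fin m)) (r : ℝ), 0 < r ∧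
    B = {z : UHS m | dist z.1.1 q ^ 2 + (z.1.2 - r) ^ 2 ≤ r ^ 2} ∧
    Bo = {z : UHS m | dist z.1.1 q ^ 2 + (z.1.2 - r) ^ 2 < r ^ 2})

/-!
Pass to the hyperboloid model: `UHS.toHyperboloid` maps the upper half-space onto the upper
sheet of the unit hyperboloid in Minkowski space, and `cosh (hdist x y)` is the Minkowski product
of the images. Let `p = σ x`, `q = σ y` and `L = d(p, q) > 0`. Convexity puts the geodesic `pq`
into `C`, so by the first variation of distance the quadrilateral `x p q y` has angles at least
`π / 2` at `p` and at `q`. Decomposing `x` and `y` along the frame of the geodesic and applying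
the Cauchy–Schwarz inequality on its (spacelike) orthogonal complement gives, with `δ = d(x, y)`
and `d' = d(y, q)`,
  `cosh δ ≥ cosh d cosh d' cosh L - sinh d sinh d'`.
This yields both `|d - d'| ≤ δ` and `cosh d cosh d' (cosh L - 1) ≤ cosh δ - 1`, hence
`cosh d · L ≤ e^δ - 1 ≤ δ e^δ`, and `e^δ → 1` as `y → x`.
-/

open Filter Topology Real

lemma arcosh_eq_real_arcosh : _root_.arcosh = Real.arcosh := rfl

lemma nonneg_of_forall_le_mul_cosh_add_mul_sinh {c b L : ℝ} (hL : 0 < L)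
    (h : ∀ s ∈ Ioo 0 L, c ≤ c * cosh s + b * sinh s) : 0 ≤ b := by
  have hlim : Tendsto (fun s => c * sinh (s / 2) + b * cosh (s / 2)) (𝓝[>] 0) (𝓝 b) := by
    have hcont : Continuous fun s => c * sinh (s / 2) + b * cosh (s / 2) := by fun_prop
    simpa using (hcont.tendsto 0).mono_left nhdsWithin_le_nhds
  refine ge_of_tendsto hlim ?_
  filter_upwards [Ioo_mem_nhdsGT hL] with s hs
  -- `c (cosh s - 1) + b sinh s = 2 sinh (s / 2) (c sinh (s / 2) + b cosh (s / 2))`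
  have hcosh : cosh s = cosh (s / 2) ^ 2 + sinh (s / 2) ^ 2 := by
    rw [← cosh_two_mul]; ring_nf
  have hsinh : sinh s = 2 * sinh (s / 2) * cosh (s / 2) := by
    rw [← sinh_two_mul]; ring_nf
  have hprod : 0 ≤ 2 * sinh (s / 2) * (c * sinh (s / 2) + b * cosh (s / 2)) := by
    have := h s hs
    rw [hcosh, hsinh, cosh_sq'] at this
    linarith
  exact nonneg_of_mul_nonneg_right hprod (by have := sinh_pos_iff.2 (half_pos hs.1); positivity)

lemma sq_div_two_le_cosh_sub_one (x : ℝ) : x ^ 2 / 2 ≤ cosh x - 1 := by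
  have hhalf : cosh x = 1 + 2 * sinh (|x| / 2) ^ 2 := by
    rw [← cosh_abs, show |x| = 2 * (|x| / 2) by ring, cosh_two_mul, cosh_sq']
    ring_nf
  have hle : |x| / 2 ≤ sinh (|x| / 2) := self_le_sinh_iff.2 (by positivity)
  nlinarith [sq_abs x, abs_nonneg x]

lemma cosh_add_le_exp_mul_cosh {x y : ℝ} (hy : 0 ≤ y) : cosh (x + y) ≤ exp y * cosh x := by
  have h : exp y * cosh x - cosh (x + y) = sinh y * exp (-x) := by
    rw [cosh_add, ← cosh_add_sinh y, ← cosh_sub_sinh x]; ring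
  nlinarith [mul_nonneg (sinh_nonneg_iff.2 hy) (exp_pos (-x)).le]

lemma exp_mul_cosh_sub_one (x : ℝ) : exp x * (cosh x - 1) = (exp x - 1) ^ 2 / 2 := by
  rw [cosh_eq, exp_neg]
  field_simp
  ring

lemma exp_sub_one_le_mul_exp (x : ℝ) : exp x - 1 ≤ x * exp x := by
  have h := add_one_le_exp (-x)
  rw [exp_neg] at h
  have : (-x + 1) * exp x ≤ 1 :=
    calc (-x + 1) * exp x ≤ (exp x)⁻¹ * exp x := by gcongr
      _ = 1 := inv_mul_cancel₀ (exp_pos x).ne'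
  linarith

lemma cosh_mul_le_exp_sub_one {d d' L δ : ℝ} (hd : 0 ≤ d) (hδ : 0 ≤ δ)
    (h : cosh d * cosh d' * cosh L - sinh d * sinh d' ≤ cosh δ) :
    cosh d * L ≤ exp δ - 1 := by
  have hsub : cosh d * cosh d' * (cosh L - 1) ≤ cosh δ - 1 := by
    have := one_le_cosh (d - d'); rw [cosh_sub] at this; linarith
  have hdd : d ≤ d' + δ := by
    have : cosh (d - d') ≤ cosh δ := by
      rw [cosh_sub]
      linarith [le_mul_of_one_le_right (by positivity : 0 ≤ cosh d * cosh d') (one_le_cosh L)]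
    rw [cosh_le_cosh, abs_of_nonneg hδ] at this
    linarith [le_abs_self (d - d')]
  have hcosh : cosh d ≤ exp δ * cosh d' :=
    (cosh_le_cosh.2 (by rw [abs_of_nonneg hd, abs_of_nonneg (by linarith)]; exact hdd)).trans
      (cosh_add_le_exp_mul_cosh hδ)
  have hL : 0 ≤ cosh d * (cosh L - 1) :=
    mul_nonneg (cosh_pos d).le (sub_nonneg.2 (one_le_cosh L))
  have hsq : (cosh d * L) ^ 2 ≤ (exp δ - 1) ^ 2 :=
    calc (cosh d * L) ^ 2 = 2 * cosh d ^ 2 * (L ^ 2 / 2) := by ring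
      _ ≤ 2 * cosh d ^ 2 * (cosh L - 1) := by gcongr; exact sq_div_two_le_cosh_sub_one L
      _ = 2 * cosh d * (cosh d * (cosh L - 1)) := by ring
      _ ≤ 2 * (exp δ * cosh d') * (cosh d * (cosh L - 1)) := by gcongr
      _ ≤ 2 * exp δ * (cosh δ - 1) := by nlinarith [exp_pos δ]
      _ = (exp δ - 1) ^ 2 := by rw [mul_assoc, exp_mul_cosh_sub_one]; ring
  exact (abs_le_of_sq_le_sq' hsq (by linarith [add_one_le_exp δ])).2

lemma sq_add_mul_le {i a b c e : ℝ} (hi : |i| ≤ a * b) :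
    (i + c * e) ^ 2 ≤ (a ^ 2 + c ^ 2) * (b ^ 2 + e ^ 2) := by
  have h : (i + c * e) ^ 2 ≤ (a * b + |c * e|) ^ 2 := by
    rw [← sq_abs (i + c * e)]
    gcongr
    exact (abs_add_le _ _).trans (by gcongr)
  rw [abs_mul] at h
  nlinarith [sq_nonneg (a * |e| - b * |c|), sq_abs c, sq_abs e]

abbrev Minkowski (m : ℕ) : Type := ℝ × EuclideanSpace ℝ (Fin m) × ℝ

namespace Minkowski

variable {m : ℕ}

noncomputable def minkowski : LinearMap.BilinForm ℝ (Minkowski m) :=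
  LinearMap.mk₂ ℝ (fun X Y => X.1 * Y.1 - inner ℝ X.2.1 Y.2.1 - X.2.2 * Y.2.2)
    (fun X X' Y => by simp only [Prod.fst_add, Prod.snd_add, inner_add_left]; ring)
    (fun a X Y => by
      simp only [Prod.smul_fst, Prod.smul_snd, smul_eq_mul, real_inner_smul_left]; ring)
    (fun X Y Y' => by simp only [Prod.fst_add, Prod.snd_add, inner_add_right]; ring)
    (fun a X Y => by
      simp only [Prod.smul_fst, Prod.smul_snd, smul_eq_mul, real_inner_smul_right]; ring)

lemma minkowski_apply (X Y : Minkowski m) :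
    minkowski X Y = X.1 * Y.1 - inner ℝ X.2.1 Y.2.1 - X.2.2 * Y.2.2 := rfl

lemma minkowski_comm (X Y : Minkowski m) : minkowski X Y = minkowski Y X := by
  simp only [minkowski_apply, real_inner_comm]; ring

lemma minkowski_self_nonpos_of_orthogonal {Y W : Minkowski m} (hY : minkowski Y Y = 1)
    (hYW : minkowski Y W = 0) : minkowski W W ≤ 0 := by
  rw [minkowski_apply, real_inner_self_eq_norm_sq] at hY ⊢
  rw [minkowski_apply] at hYW
  have hCS : (Y.1 * W.1) ^ 2 ≤ (Y.1 ^ 2 - 1) * (‖W.2.1‖ ^ 2 + W.2.2 ^ 2) := by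
    rw [show Y.1 * W.1 = inner ℝ Y.2.1 W.2.1 + Y.2.2 * W.2.2 by linarith,
      show Y.1 ^ 2 - 1 = ‖Y.2.1‖ ^ 2 + Y.2.2 ^ 2 by linarith]
    exact sq_add_mul_le (abs_real_inner_le_norm _ _)
  nlinarith [sq_nonneg ‖Y.2.1‖, sq_nonneg Y.2.2, sq_nonneg ‖W.2.1‖, sq_nonneg W.2.2]

lemma sq_minkowski_le_of_orthogonal {Y W₁ W₂ : Minkowski m} (hY : minkowski Y Y = 1)
    (h₁ : minkowski Y W₁ = 0) (h₂ : minkowski Y W₂ = 0) :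
    minkowski W₁ W₂ ^ 2 ≤ minkowski W₁ W₁ * minkowski W₂ W₂ := by
  -- `-minkowski` is positive semidefinite on the orthogonal complement of `Y`
  have hquad : ∀ t : ℝ, 0 ≤ -minkowski W₂ W₂ * (t * t) + -(2 * minkowski W₁ W₂) * t
      + -minkowski W₁ W₁ := by
    intro t
    have hW := minkowski_self_nonpos_of_orthogonal (W := W₁ + t • W₂) hY (by simp [h₁, h₂])
    simp only [map_add, map_smul, LinearMap.add_apply, LinearMap.smul_apply, smul_eq_mul,
      minkowski_comm W₂ W₁] at hW
    linarith
  have := discrim_le_zero hquad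
  rw [discrim] at this
  linarith

structure IsUnitTangent (P V : Minkowski m) : Prop where
  minkowski_base : minkowski P P = 1
  minkowski_tangent : minkowski V V = -1
  orthogonal : minkowski P V = 0

noncomputable def perpPart (P V W : Minkowski m) : Minkowski m :=
  W - minkowski W P • P + minkowski W V • V

noncomputable def geodesic (P V : Minkowski m) (s : ℝ) : Minkowski m := cosh s • P + sinh s • V

lemma minkowski_geodesic (Z P V : Minkowski m) (s : ℝ) :
    minkowski Z (geodesic P V s) = cosh s * minkowski Z P + sinh s * minkowski Z V := by
  simp [geodesic]

@[simp]
lemma geodesic_zero (P V : Minkowski m) : geodesic P V 0 = P := by simp [geodesic]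

lemma geodesic_sub (P V : Minkowski m) (L s : ℝ) :
    geodesic P V (L - s) = geodesic (geodesic P V L) (-geodesic V P L) s := by
  simp only [geodesic, cosh_sub, sinh_sub]
  module

lemma exists_isUnitTangent_geodesic_eq {P Q : Minkowski m} {L : ℝ} (hP : minkowski P P = 1)
    (hQ : minkowski Q Q = 1) (hPQ : minkowski P Q = cosh L) (hL : 0 < L) :
    ∃ V, IsUnitTangent P V ∧ geodesic P V L = Q := by
  have hsinh : sinh L ≠ 0 := (sinh_pos_iff.2 hL).ne'
  have hQP : minkowski Q P = cosh L := by rw [minkowski_comm, hPQ]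
  refine ⟨(sinh L)⁻¹ • (Q - cosh L • P), ⟨hP, ?_, ?_⟩, ?_⟩
  · simp only [map_smul, map_sub, LinearMap.smul_apply, LinearMap.sub_apply, smul_eq_mul,
      hP, hQ, hPQ, hQP]
    field_simp
    linear_combination -cosh_sq_sub_sinh_sq L
  · simp [hP, hPQ]
  · simp only [geodesic, smul_smul, mul_inv_cancel₀ hsinh, one_smul]
    abel

namespace IsUnitTangent

variable {P V : Minkowski m}

lemma minkowski_perpPart (h : IsUnitTangent P V) (W : Minkowski m) :
    minkowski P (perpPart P V W) = 0 := by
  simp [perpPart, h.minkowski_base, h.orthogonal, minkowski_comm P W]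

lemma minkowski_eq_add_perpPart (h : IsUnitTangent P V) (W₁ W₂ : Minkowski m) :
    minkowski W₁ W₂ = minkowski W₁ P * minkowski W₂ P - minkowski W₁ V * minkowski W₂ V
      + minkowski (perpPart P V W₁) (perpPart P V W₂) := by
  have hVP : minkowski V P = 0 := by rw [minkowski_comm, h.orthogonal]
  simp only [perpPart, map_add, map_sub, map_smul, LinearMap.add_apply, LinearMap.sub_apply,
    LinearMap.smul_apply, smul_eq_mul, h.minkowski_base, h.minkowski_tangent, h.orthogonal, hVP,
    minkowski_comm P W₂, minkowski_comm V W₂]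
  ring

lemma minkowski_perpPart_self_nonpos (h : IsUnitTangent P V) (W : Minkowski m) :
    minkowski (perpPart P V W) (perpPart P V W) ≤ 0 :=
  minkowski_self_nonpos_of_orthogonal h.minkowski_base (h.minkowski_perpPart W)

lemma sq_minkowski_tangent_le (h : IsUnitTangent P V) (W : Minkowski m) :
    minkowski W V ^ 2 ≤ minkowski W P ^ 2 - minkowski W W := by
  have := h.minkowski_eq_add_perpPart W W
  have := h.minkowski_perpPart_self_nonpos W
  nlinarith

lemma minkowski_geodesic_geodesic (h : IsUnitTangent P V) (s t : ℝ) :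
    minkowski (geodesic P V s) (geodesic P V t) = cosh (s - t) := by
  have hVP : minkowski V P = 0 := by rw [minkowski_comm, h.orthogonal]
  simp only [geodesic, map_add, map_smul, LinearMap.add_apply, LinearMap.smul_apply,
    smul_eq_mul, h.minkowski_base, h.minkowski_tangent, h.orthogonal, hVP, cosh_sub]
  ring

lemma quadrilateral_le (h : IsUnitTangent P V) {X Y : Minkowski m} {d d' L : ℝ}
    (hX : minkowski X X = 1) (hY : minkowski Y Y = 1) (hd : 0 ≤ d) (hd' : 0 ≤ d')
    (hL : 0 ≤ L) (hXP : minkowski X P = cosh d) (hYQ : minkowski Y (geodesic P V L) = cosh d')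
    (hXV : 0 ≤ minkowski X V) (hYW : 0 ≤ minkowski Y (-geodesic V P L)) :
    cosh d * cosh d' * cosh L - sinh d * sinh d' ≤ minkowski X Y := by
  rw [minkowski_geodesic] at hYQ
  rw [map_neg, minkowski_geodesic] at hYW
  set e := -(cosh L * minkowski Y V + sinh L * minkowski Y P)
  have hch := cosh_sq_sub_sinh_sq L
  -- invert the boost taking `(P, V)` to the frame `(geodesic P V L, geodesic V P L)`
  have hYP : minkowski Y P = cosh d' * cosh L + e * sinh L := by
    linear_combination (-minkowski Y P) * hch + cosh L * hYQ
  have hYV : minkowski Y V = -(cosh d' * sinh L + e * cosh L) := by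
    linear_combination (-minkowski Y V) * hch - sinh L * hYQ
  have hXX := h.minkowski_eq_add_perpPart X X
  have hYY := h.minkowski_eq_add_perpPart Y Y
  rw [hX, hXP] at hXX
  rw [hY, hYP, hYV] at hYY
  have hXX' : -minkowski (perpPart P V X) (perpPart P V X) ≤ sinh d ^ 2 := by
    nlinarith [sinh_sq d, sq_nonneg (minkowski X V)]
  have hYY' : -minkowski (perpPart P V Y) (perpPart P V Y) ≤ sinh d' ^ 2 := by
    nlinarith [sinh_sq d', sq_nonneg e]
  have hperp : -(sinh d * sinh d') ≤ minkowski (perpPart P V X) (perpPart P V Y) := by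
    refine (abs_le_of_sq_le_sq' ?_ (by positivity)).1
    calc _ ≤ _ := sq_minkowski_le_of_orthogonal h.minkowski_base (h.minkowski_perpPart X)
          (h.minkowski_perpPart Y)
      _ = (-minkowski (perpPart P V X) (perpPart P V X))
          * (-minkowski (perpPart P V Y) (perpPart P V Y)) := by ring
      _ ≤ sinh d ^ 2 * sinh d' ^ 2 :=
          mul_le_mul hXX' hYY' (by linarith [h.minkowski_perpPart_self_nonpos Y]) (sq_nonneg _)
      _ = (sinh d * sinh d') ^ 2 := by ring
  rw [h.minkowski_eq_add_perpPart X Y, hXP, hYP, hYV]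
  have hsinhL := sinh_nonneg_iff.2 hL
  nlinarith [mul_nonneg (mul_nonneg (cosh_pos d).le hYW) hsinhL,
    mul_nonneg (mul_nonneg hXV (cosh_pos d').le) hsinhL,
    mul_nonneg (mul_nonneg hXV hYW) (cosh_pos L).le]

end IsUnitTangent

end Minkowski

namespace UHS

open Minkowski

variable {m : ℕ}

noncomputable def toHyperboloid (z : UHS m) : Minkowski m :=
  ((‖z.1.1‖ ^ 2 + z.1.2 ^ 2 + 1) / (2 * z.1.2), z.1.2⁻¹ • z.1.1,
    (‖z.1.1‖ ^ 2 + z.1.2 ^ 2 - 1) / (2 * z.1.2))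

lemma minkowski_toHyperboloid (x y : UHS m) :
    minkowski (toHyperboloid x) (toHyperboloid y)
      = 1 + (dist x.1.1 y.1.1 ^ 2 + (x.1.2 - y.1.2) ^ 2) / (2 * x.1.2 * y.1.2) := by
  obtain ⟨⟨p, t⟩, ht : 0 < t⟩ := x
  obtain ⟨⟨q, u⟩, hu : 0 < u⟩ := y
  simp only [minkowski_apply, toHyperboloid, real_inner_smul_left, real_inner_smul_right,
    dist_eq_norm, norm_sub_sq_real]
  field_simp
  ring

lemma one_le_minkowski_toHyperboloid (x y : UHS m) :
    1 ≤ minkowski (toHyperboloid x) (toHyperboloid y) := by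
  have := x.2
  have := y.2
  rw [minkowski_toHyperboloid]
  exact le_add_of_nonneg_right (by positivity)

lemma minkowski_toHyperboloid_self (x : UHS m) :
    minkowski (toHyperboloid x) (toHyperboloid x) = 1 := by
  simp [minkowski_toHyperboloid]

lemma cosh_hdist (x y : UHS m) :
    cosh (hdist x y) = minkowski (toHyperboloid x) (toHyperboloid y) := by
  rw [hdist, ← minkowski_toHyperboloid, arcosh_eq_real_arcosh,
    Real.cosh_arcosh (one_le_minkowski_toHyperboloid x y)]

lemma hdist_nonneg (x y : UHS m) : 0 ≤ hdist x y := by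
  rw [hdist, ← minkowski_toHyperboloid, arcosh_eq_real_arcosh]
  exact Real.arcosh_nonneg (one_le_minkowski_toHyperboloid x y)

lemma hdist_le_hdist_iff_minkowski_le {x y z : UHS m} :
    hdist z x ≤ hdist z y ↔
      minkowski (toHyperboloid z) (toHyperboloid x)
        ≤ minkowski (toHyperboloid z) (toHyperboloid y) := by
  rw [← cosh_hdist, ← cosh_hdist, cosh_le_cosh, abs_of_nonneg (hdist_nonneg _ _),
    abs_of_nonneg (hdist_nonneg _ _)]

/-- The null vector representing the boundary point `∞` of the upper half-space. -/
def nullInfty : Minkowski m := (1, 0, 1)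

lemma minkowski_nullInfty (Z : Minkowski m) : minkowski nullInfty Z = Z.1 - Z.2.2 := by
  simp [minkowski_apply, nullInfty]

lemma minkowski_nullInfty_toHyperboloid (z : UHS m) :
    minkowski nullInfty (toHyperboloid z) = z.1.2⁻¹ := by
  have : z.1.2 ≠ 0 := z.2.ne'
  rw [minkowski_nullInfty, toHyperboloid]
  field_simp
  ring

def mk (p : EuclideanSpace ℝ (Fin m)) {t : ℝ} (ht : 0 < t) : UHS m := ⟨(p, t), ht⟩

lemma toHyperboloid_mk (p : EuclideanSpace ℝ (Fin m)) {t : ℝ} (ht : 0 < t) :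
    toHyperboloid (mk p ht) = ((‖p‖ ^ 2 + t ^ 2 + 1) / (2 * t), t⁻¹ • p,
      (‖p‖ ^ 2 + t ^ 2 - 1) / (2 * t)) := rfl

noncomputable def ofHyperboloid (Z : Minkowski m) : UHS m :=
  if h : 0 < minkowski nullInfty Z then mk ((minkowski nullInfty Z)⁻¹ • Z.2.1) (inv_pos.2 h)
  else mk 0 one_pos

lemma ofHyperboloid_toHyperboloid (z : UHS m) : ofHyperboloid (toHyperboloid z) = z := by
  have hpos : 0 < minkowski nullInfty (toHyperboloid z) := by
    rw [minkowski_nullInfty_toHyperboloid]; exact inv_pos.2 z.2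
  rw [ofHyperboloid, dif_pos hpos]
  apply Subtype.ext
  simp only [mk]
  rw [minkowski_nullInfty_toHyperboloid, inv_inv]
  simp [toHyperboloid, smul_smul, z.2.ne']

lemma toHyperboloid_ofHyperboloid {Z : Minkowski m} (hZ : minkowski Z Z = 1)
    (hpos : 0 < minkowski nullInfty Z) : toHyperboloid (ofHyperboloid Z) = Z := by
  rw [ofHyperboloid, dif_pos hpos, toHyperboloid_mk, minkowski_nullInfty]
  rw [minkowski_nullInfty] at hpos
  rw [minkowski_apply, real_inner_self_eq_norm_sq] at hZ
  simp only [norm_smul, mul_pow, Real.norm_eq_abs, sq_abs, smul_smul, inv_inv,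
    mul_inv_cancel₀ hpos.ne', one_smul]
  refine Prod.ext ?_ (Prod.ext rfl ?_) <;>
  · field_simp
    linear_combination -hZ

lemma minkowski_nullInfty_geodesic_pos {P V : Minkowski m} (h : IsUnitTangent P V)
    (hP : 0 < minkowski nullInfty P) (s : ℝ) : 0 < minkowski nullInfty (geodesic P V s) := by
  have hV : |minkowski nullInfty V| ≤ minkowski nullInfty P := by
    refine abs_le_of_sq_le_sq ?_ hP.le
    have hnull : minkowski (nullInfty : Minkowski m) nullInfty = 0 := by
      rw [minkowski_nullInfty]; simp [nullInfty]
    linarith [h.sq_minkowski_tangent_le nullInfty]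
  have hsinh : |sinh s| < cosh s := by
    rw [abs_sinh, ← cosh_abs s]; exact sinh_lt_cosh _
  rw [minkowski_geodesic]
  nlinarith [neg_abs_le (sinh s * minkowski nullInfty V), abs_mul (sinh s) (minkowski nullInfty V),
    mul_le_mul_of_nonneg_left hV (abs_nonneg (sinh s))]

variable {p : UHS m} {V : Minkowski m}

lemma toHyperboloid_ofHyperboloid_geodesic (h : IsUnitTangent (toHyperboloid p) V) (s : ℝ) :
    toHyperboloid (ofHyperboloid (geodesic (toHyperboloid p) V s))
      = geodesic (toHyperboloid p) V s :=
  toHyperboloid_ofHyperboloid (by rw [h.minkowski_geodesic_geodesic, sub_self, cosh_zero])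
    (minkowski_nullInfty_geodesic_pos h
      (by rw [minkowski_nullInfty_toHyperboloid]; exact inv_pos.2 p.2) s)

lemma isGeodesicSeg_ofHyperboloid_geodesic (h : IsUnitTangent (toHyperboloid p) V) (a b : ℝ) :
    IsGeodesicSeg (fun s => ofHyperboloid (geodesic (toHyperboloid p) V s)) a b := by
  intro s _ t _
  refine Real.cosh_injOn (hdist_nonneg _ _) (abs_nonneg (s - t)) ?_
  rw [cosh_hdist, toHyperboloid_ofHyperboloid_geodesic h, toHyperboloid_ofHyperboloid_geodesic h,
    h.minkowski_geodesic_geodesic, cosh_abs]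

lemma minkowski_nonneg_of_forall_hdist_le {C : Set (UHS m)} {z : UHS m} {W : Minkowski m}
    {L : ℝ} (hL : 0 < L) (hp : ∀ c ∈ C, hdist z p ≤ hdist z c)
    (hC : ∀ s ∈ Ioo 0 L, geodesic (toHyperboloid p) W s ∈ toHyperboloid '' C) :
    0 ≤ minkowski (toHyperboloid z) W := by
  refine nonneg_of_forall_le_mul_cosh_add_mul_sinh
    (c := minkowski (toHyperboloid z) (toHyperboloid p)) hL fun s hs => ?_
  obtain ⟨c, hc, hcs⟩ := hC s hs
  have := hdist_le_hdist_iff_minkowski_le.1 (hp c hc)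
  rwa [hcs, minkowski_geodesic, mul_comm (cosh s), mul_comm (sinh s)] at this

theorem cosh_hdist_mul_hdist_le_exp_sub_one {C : Set (UHS m)} (hC : HConvex C)
    {σ : UHS m → UHS m} (hσ : ∀ z : UHS m, σ z ∈ C ∧ ∀ c ∈ C, hdist z (σ z) ≤ hdist z c)
    (x y : UHS m) : cosh (hdist x (σ x)) * hdist (σ x) (σ y) ≤ exp (hdist x y) - 1 := by
  rcases (hdist_nonneg (σ x) (σ y)).eq_or_lt with hL | hL
  · rw [← hL, mul_zero, sub_nonneg]
    exact one_le_exp (hdist_nonneg x y)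
  set L := hdist (σ x) (σ y)
  set P := toHyperboloid (σ x)
  obtain ⟨V, hV, hVL⟩ := exists_isUnitTangent_geodesic_eq (minkowski_toHyperboloid_self _)
    (minkowski_toHyperboloid_self _) (cosh_hdist _ _).symm hL
  have hseg : ∀ s ∈ Icc 0 L, geodesic P V s ∈ toHyperboloid '' C := fun s hs =>
    ⟨_, hC _ (hσ x).1 _ (hσ y).1 _ 0 L hL.le (isGeodesicSeg_ofHyperboloid_geodesic hV 0 L)
      (by simp [ofHyperboloid_toHyperboloid]) (by rw [hVL, ofHyperboloid_toHyperboloid]) s hs,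
      toHyperboloid_ofHyperboloid_geodesic hV s⟩
  have hXV : 0 ≤ minkowski (toHyperboloid x) V :=
    minkowski_nonneg_of_forall_hdist_le hL (hσ x).2 fun s hs => hseg s (Ioo_subset_Icc_self hs)
  have hYW : 0 ≤ minkowski (toHyperboloid y) (-geodesic V P L) :=
    minkowski_nonneg_of_forall_hdist_le hL (hσ y).2 fun s hs => by
      rw [← hVL, ← geodesic_sub]
      exact hseg _ ⟨by linarith [hs.2], by linarith [hs.1]⟩
  have hquad := hV.quadrilateral_le (d' := hdist y (σ y)) (minkowski_toHyperboloid_self x)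
    (minkowski_toHyperboloid_self y) (hdist_nonneg _ _) (hdist_nonneg _ _) hL.le
    (cosh_hdist _ _).symm (by rw [hVL, cosh_hdist]) hXV hYW
  rw [← cosh_hdist] at hquad
  exact cosh_mul_le_exp_sub_one (hdist_nonneg _ _) (hdist_nonneg _ _) hquad

end UHS

theorem projection_contracts_local_metric_general {m : ℕ} (C : Set (UHS m))
    (hCconv : HConvex C)
    (σ : UHS m → UHS m)
    (hσ : ∀ z : UHS m, σ z ∈ C ∧ ∀ c ∈ C, hdist z (σ z) ≤ hdist z c)
    (x : UHS m) (d : ℝ) (hd : hdist x (σ x) = d) :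
    Real.exp d / 2 ≤ Real.cosh d ∧
    ∀ ε > (0 : ℝ), ∃ r > (0 : ℝ), ∀ y : UHS m, hdist x y < r →
      Real.cosh d * hdist (σ x) (σ y) ≤ (1 + ε) * hdist x y := by
  refine ⟨by rw [cosh_eq]; linarith [exp_pos (-d)], fun ε hε => ?_⟩
  refine ⟨log (1 + ε), log_pos (by linarith), fun y hy => ?_⟩
  have hexp : exp (hdist x y) < 1 + ε := (lt_log_iff_exp_lt (by linarith)).1 hy
  calc cosh d * hdist (σ x) (σ y) ≤ exp (hdist x y) - 1 :=
        hd ▸ UHS.cosh_hdist_mul_hdist_le_exp_sub_one hCconv hσ x y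
    _ ≤ hdist x y * exp (hdist x y) := exp_sub_one_le_mul_exp _
    _ ≤ (1 + ε) * hdist x y := by
        rw [mul_comm]; exact mul_le_mul_of_nonneg_right hexp.le (UHS.hdist_nonneg x y)

/-- **Lemma A1.1.** The nearest-point projection onto a closed convex subset `C`
of hyperbolic space contracts the local metric at a point `x` at distance `d`
from `C` by at least a factor `cosh d` (and `cosh d ≥ e^d / 2`). -/
theorem projection_contracts_local_metric {m : ℕ} (C : Set (UHS m))
    (hCcl : IsClosed C) (hCconv : HConvex C) (hCne : C.Nonempty)
    (σ : UHS m → UHS m)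
    (hσ : ∀ z : UHS m, σ z ∈ C ∧ ∀ c ∈ C, hdist z (σ z) ≤ hdist z c)
    (x : UHS m) (d : ℝ) (hd : hdist x (σ x) = d) :
    Real.exp d / 2 ≤ Real.cosh d ∧
    ∀ ε > (0 : ℝ), ∃ r > (0 : ℝ), ∀ y : UHS m, hdist x y < r →
      Real.cosh d * hdist (σ x) (σ y) ≤ (1 + ε) * hdist x y :=
  projection_contracts_local_metric_general C hCconv σ hσ x d hd
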